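/- arXiv:1906.00037 — 4 statements merged into one kernel-verified Lean document; each statement's English description precedes it below -/
import Mathlib

section
/- If f is convex, three times continuously differentiable on an open convex set Ω, and ν-compatible with a self-concordant barrier B (i.e., |D³f(x)(ξ,ξ,ξ)| ≤ 2ν·D²f(x)(ξ,ξ)·[D²B(x)(ξ,ξ)]^{1/2} for all x ∈ Ω and ξ, where B is 1-self-concordant), then for every β ≥ 0 the function F_β(x) = βf(x) + B(x) is κ-self-concordant on Ω with κ = 1 + (2/3)ν. -/
open scoped RealInnerProductSpace

private lemma cos_three_halves_pi : Real.cos ((3/2 : ℝ) * Real.pi) = 0 := by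
  have : (3/2 : ℝ) * Real.pi = Real.pi/2 + Real.pi := by ring
  rw [this, Real.cos_add]
  simp

private lemma rpow_three_halves_nonneg (x : ℝ) : 0 ≤ x ^ (3/2 : ℝ) := by
  rcases lt_trichotomy x 0 with h | h | h
  · rw [Real.rpow_def_of_neg h, cos_three_halves_pi, mul_zero]
  · simp [h, Real.zero_rpow]
  · positivity

private lemma rpow_three_halves_nonpos (x : ℝ) (hx : x ≤ 0) : x ^ (3/2 : ℝ) = 0 := by
  rcases eq_or_lt_of_le hx with h | h
  · rw [h]; exact Real.zero_rpow (by norm_num : (3/2:ℝ) ≠ 0)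
  · rw [Real.rpow_def_of_neg h, cos_three_halves_pi, mul_zero]

private lemma rpow_three_halves_eq (x : ℝ) (hx : 0 ≤ x) :
    x ^ (3/2 : ℝ) = Real.sqrt (x ^ 3) := by
  rw [show (3/2 : ℝ) = (3 : ℕ) * (1/2 : ℝ) by norm_num, Real.rpow_mul hx,
    Real.rpow_natCast, ← Real.sqrt_eq_rpow]

private lemma key_ineq (s b : ℝ) (hs : 0 ≤ s) (hb : 0 ≤ b) :
    s * Real.sqrt b ≤ (2/3) * (s + b) ^ (3/2 : ℝ) := by
  rw [rpow_three_halves_eq _ (by linarith)]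
  have h1 : s * Real.sqrt b = Real.sqrt (s ^ 2 * b) := by
    rw [Real.sqrt_mul (by positivity), Real.sqrt_sq hs]
  rw [h1, show (2/3 : ℝ) * Real.sqrt ((s+b)^3) = Real.sqrt ((4/9) * (s+b)^3) by
    rw [Real.sqrt_mul (by norm_num), show (4/9 : ℝ) = (2/3)^2 by norm_num,
      Real.sqrt_sq (by norm_num)]]
  apply Real.sqrt_le_sqrt
  nlinarith [mul_nonneg (sq_nonneg (s - 2*b)) (by linarith : (0:ℝ) ≤ s + b/4)]


/-- If `f` is convex and C³ on an open convex set `Ω` and `ν`-compatible with a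
1-self-concordant barrier `B` on `Ω`, then for every `β ≥ 0` the function
`F_β = β f + B` is `κ`-self-concordant on `Ω` with `κ = 1 + (2/3) ν`. -/
theorem compatible_implies_self_concordant
    {E : Type*} [NormedAddCommGroup E] [InnerProductSpace ℝ E] [FiniteDimensional ℝ E]
    (Ω : Set E) (hΩ : IsOpen Ω) (hΩconv : Convex ℝ Ω)
    (f B : E → ℝ) (ν : ℝ) (hν : 1 ≤ ν)
    (hf : ContDiffOn ℝ 3 f Ω) (hB : ContDiffOn ℝ 3 B Ω)
    (hfconv : ConvexOn ℝ Ω f) (hBconv : ConvexOn ℝ Ω B)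
    -- `B` is 1-self-concordant on `Ω`
    (hBsc : ∀ x ∈ Ω, ∀ ξ : E,
      |iteratedFDeriv ℝ 3 B x ![ξ, ξ, ξ]| ≤
        2 * (iteratedFDeriv ℝ 2 B x ![ξ, ξ]) ^ (3/2 : ℝ))
    -- `f` is `ν`-compatible with `B`
    (hcomp : ∀ x ∈ Ω, ∀ ξ : E,
      |iteratedFDeriv ℝ 3 f x ![ξ, ξ, ξ]| ≤
        2 * ν * (iteratedFDeriv ℝ 2 f x ![ξ, ξ]) *
          Real.sqrt (iteratedFDeriv ℝ 2 B x ![ξ, ξ])) :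
    ∀ β : ℝ, 0 ≤ β → ∀ x ∈ Ω, ∀ ξ : E,
      |iteratedFDeriv ℝ 3 (fun y => β * f y + B y) x ![ξ, ξ, ξ]| ≤
        2 * (1 + (2/3) * ν) *
          (iteratedFDeriv ℝ 2 (fun y => β * f y + B y) x ![ξ, ξ]) ^ (3/2 : ℝ) := by
  intro β hβ x hx ξ
  have hu : UniqueDiffOn ℝ Ω := hΩ.uniqueDiffOn
  have key : ∀ n : ℕ, (n : WithTop ℕ∞) ≤ 3 → ∀ m : Fin n → E,
      iteratedFDeriv ℝ n (fun y => β * f y + B y) x m =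
        β * iteratedFDeriv ℝ n f x m + iteratedFDeriv ℝ n B x m := by
    intro n hn m
    have hfn : ContDiffOn ℝ n f Ω := hf.of_le hn
    have hBn : ContDiffOn ℝ n B Ω := hB.of_le hn
    have hfn' : ContDiffOn ℝ n (fun y => β * f y) Ω := hfn.const_smul β
    rw [← iteratedFDerivWithin_of_isOpen n hΩ hx,
      iteratedFDerivWithin_add_apply' (hfn'.contDiffWithinAt hx) (hBn.contDiffWithinAt hx) hu hx]
    have hs : iteratedFDerivWithin ℝ n (fun y => β * f y) Ω x =
        β • iteratedFDerivWithin ℝ n f Ω x :=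
      iteratedFDerivWithin_const_smul_apply (a := β) (hfn.contDiffWithinAt hx) hu hx
    rw [ContinuousMultilinearMap.add_apply, hs,
      iteratedFDerivWithin_of_isOpen n hΩ hx, iteratedFDerivWithin_of_isOpen n hΩ hx]
    simp [smul_eq_mul]
  rw [key 2 (by exact_mod_cast Nat.le_succ 2) _, key 3 le_rfl _]
  have hTf := hcomp x hx ξ
  have hTB := hBsc x hx ξ
  set t := iteratedFDeriv ℝ 2 f x ![ξ, ξ] with ht
  set b := iteratedFDeriv ℝ 2 B x ![ξ, ξ] with hbdef
  set Tf := iteratedFDeriv ℝ 3 f x ![ξ, ξ, ξ] with hTfdef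
  set TB := iteratedFDeriv ℝ 3 B x ![ξ, ξ, ξ] with hTBdef
  rcases le_or_gt b 0 with hb | hb
  · -- degenerate case: b ≤ 0, both third derivatives vanish
    have hsb : Real.sqrt b = 0 := Real.sqrt_eq_zero_of_nonpos hb
    rw [hsb] at hTf
    have hTf0 : Tf = 0 := abs_eq_zero.mp (le_antisymm (by linarith) (abs_nonneg _))
    rw [rpow_three_halves_nonpos b hb] at hTB
    have hTB0 : TB = 0 := abs_eq_zero.mp (le_antisymm (by linarith) (abs_nonneg _))
    rw [hTf0, hTB0]
    have h0 := rpow_three_halves_nonneg (β * t + b)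
    have : 0 ≤ 2 * (1 + (2/3) * ν) * (β * t + b) ^ (3/2 : ℝ) :=
      mul_nonneg (by linarith) h0
    simpa using this
  · -- main case: b > 0
    have hsb : 0 < Real.sqrt b := Real.sqrt_pos.mpr hb
    have htpos : 0 ≤ t := by
      by_contra h
      push_neg at h
      have : 2 * ν * t * Real.sqrt b < 0 := by
        apply mul_neg_of_neg_of_pos _ hsb
        nlinarith
      linarith [abs_nonneg Tf]
    have hs : 0 ≤ β * t := mul_nonneg hβ htpos
    have habs : |β * Tf + TB| ≤ β * |Tf| + |TB| := by
      calc |β * Tf + TB| ≤ |β * Tf| + |TB| := abs_add_le _ _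
        _ = β * |Tf| + |TB| := by rw [abs_mul, abs_of_nonneg hβ]
    have h1 : β * |Tf| ≤ 2 * ν * (β * t) * Real.sqrt b := by
      have := mul_le_mul_of_nonneg_left hTf hβ
      nlinarith
    have h2 : b ^ (3/2 : ℝ) ≤ (β * t + b) ^ (3/2 : ℝ) :=
      Real.rpow_le_rpow hb.le (by linarith) (by norm_num)
    have h3 : (β * t) * Real.sqrt b ≤ (2/3) * (β * t + b) ^ (3/2 : ℝ) :=
      key_ineq _ _ hs hb.le
    have hν0 : (0:ℝ) ≤ 2 * ν := by linarith
    calc |β * Tf + TB| ≤ β * |Tf| + |TB| := habs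
      _ ≤ 2 * ν * (β * t) * Real.sqrt b + 2 * b ^ (3/2 : ℝ) := by linarith
      _ ≤ 2 * ν * ((2/3) * (β * t + b) ^ (3/2 : ℝ)) + 2 * (β * t + b) ^ (3/2 : ℝ) := by
          have := mul_le_mul_of_nonneg_left h3 hν0
          linarith
      _ = 2 * (1 + (2/3) * ν) * (β * t + b) ^ (3/2 : ℝ) := by ring
end

section
/- The function B(X) = -ln det(X) is 1-self-concordant on the cone of n×n positive definite symmetric matrices: |D³B(X)(ξ,ξ,ξ)| ≤ 2[D²B(X)(ξ,ξ)]^{3/2} for all positive definite X and symmetric ξ. -/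
open Matrix Finset

lemma abs_sum_cube_le_aux {n : Type*} [Fintype n] (a : n → ℝ) :
    |∑ i, (a i) ^ 3| ≤ (∑ i, (a i) ^ 2) ^ (3/2 : ℝ) := by
  set t : ℝ := ∑ i, (a i) ^ 2 with ht
  have ht0 : 0 ≤ t := Finset.sum_nonneg fun i _ => sq_nonneg _
  have habs : ∀ i, |a i| ≤ Real.sqrt t := by
    intro i
    rw [← Real.sqrt_sq_eq_abs]
    exact Real.sqrt_le_sqrt (Finset.single_le_sum (fun j _ => sq_nonneg (a j)) (mem_univ i))
  have h1 : |∑ i, (a i) ^ 3| ≤ ∑ i, (a i) ^ 2 * |a i| := by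
    refine (Finset.abs_sum_le_sum_abs _ _).trans (le_of_eq ?_)
    refine Finset.sum_congr rfl fun i _ => ?_
    rw [abs_pow, pow_succ, sq_abs]
  have h2 : ∑ i, (a i) ^ 2 * |a i| ≤ ∑ i, (a i) ^ 2 * Real.sqrt t :=
    Finset.sum_le_sum fun i _ => mul_le_mul_of_nonneg_left (habs i) (sq_nonneg _)
  have h3 : ∑ i, (a i) ^ 2 * Real.sqrt t = t * Real.sqrt t := by
    rw [← Finset.sum_mul]
  have h4 : t ^ (3/2 : ℝ) = t * Real.sqrt t := by
    rw [show (3/2 : ℝ) = 1 + 1/2 by norm_num,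
      Real.rpow_add_of_nonneg ht0 zero_le_one (by norm_num), Real.rpow_one,
      ← Real.sqrt_eq_rpow]
  rw [h4]
  exact h1.trans (h2.trans_eq h3)

/-- `B(X) = -ln det X` is 1-self-concordant on the positive definite symmetric matrices:
`|D³B(X)(ξ,ξ,ξ)| ≤ 2 [D²B(X)(ξ,ξ)]^{3/2}`, where explicitly
`D²B(X)(ξ,ξ) = Tr((X⁻¹ξ)²)` and `D³B(X)(ξ,ξ,ξ) = -2 Tr((X⁻¹ξ)³)`. -/
theorem neg_log_det_self_concordant {n : Type*} [Fintype n] [DecidableEq n]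
    (X : Matrix n n ℝ) (hX : X.PosDef) (ξ : Matrix n n ℝ) (hξ : ξᵀ = ξ) :
    |(-2 : ℝ) * ((X⁻¹ * ξ) ^ 3).trace| ≤ 2 * (((X⁻¹ * ξ) ^ 2).trace) ^ (3/2 : ℝ) := by
  classical
  set Y := (open scoped MatrixOrder in CFC.sqrt X) with hYdef
  have hYY : Y * Y = X := by
    open scoped MatrixOrder in exact CFC.sqrt_mul_sqrt_self X hX.posSemidef.nonneg
  have hYherm : Yᴴ = Y := by
    open scoped MatrixOrder in exact (CFC.sqrt_nonneg X).posSemidef.1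
  -- Y is invertible
  have hdetX : X.det ≠ 0 := hX.det_pos.ne'
  have hdetY : IsUnit Y.det := by
    have : Y.det * Y.det = X.det := by rw [← det_mul, hYY]
    exact isUnit_iff_ne_zero.mpr fun h => hdetX (by rw [← this, h, mul_zero])
  have hYinv : Y⁻¹ * Y = 1 := nonsing_inv_mul Y hdetY
  have hYinv' : Y * Y⁻¹ = 1 := mul_nonsing_inv Y hdetY
  set S := Y⁻¹ * ξ * Y⁻¹ with hSdef
  have hXinv : X⁻¹ = Y⁻¹ * Y⁻¹ := by rw [← hYY, Matrix.mul_inv_rev]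
  have hconj : X⁻¹ * ξ = Y⁻¹ * S * Y := by
    rw [hSdef, hXinv]
    rw [Matrix.mul_assoc, Matrix.mul_assoc, Matrix.mul_assoc, hYinv, Matrix.mul_one]
  have hcancelY : ∀ M : Matrix n n ℝ, Y * (Y⁻¹ * M) = M := fun M => by
    rw [← Matrix.mul_assoc, hYinv', one_mul]
  have hS : S.IsHermitian := by
    have hYinvH : (Y⁻¹)ᴴ = Y⁻¹ := by rw [conjTranspose_nonsing_inv, hYherm]
    unfold IsHermitian
    rw [hSdef, conjTranspose_mul, conjTranspose_mul, hYinvH]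
    rw [show ξᴴ = ξ from by rwa [conjTranspose_eq_transpose_of_trivial]]
    rw [Matrix.mul_assoc]
  -- traces of powers
  have htr : ∀ k : ℕ, ((X⁻¹ * ξ) ^ k).trace = (S ^ k).trace := by
    intro k
    have hpow : (X⁻¹ * ξ) ^ k = Y⁻¹ * S ^ k * Y := by
      induction k with
      | zero => simp [hYinv]
      | succ m ih =>
        rw [pow_succ, pow_succ, ih, hconj]
        simp only [Matrix.mul_assoc]
        rw [hcancelY]
    rw [hpow, trace_mul_cycle]
    simp only [Matrix.mul_assoc]
    rw [hcancelY]
  -- spectral theorem for S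
  set U : Matrix n n ℝ := (hS.eigenvectorUnitary : Matrix n n ℝ) with hU
  have hUU : star U * U = 1 := Matrix.mem_unitaryGroup_iff'.mp hS.eigenvectorUnitary.2
  have hUU' : U * star U = 1 := Matrix.mem_unitaryGroup_iff.mp hS.eigenvectorUnitary.2
  have hcancelU : ∀ M : Matrix n n ℝ, star U * (U * M) = M := fun M => by
    rw [← Matrix.mul_assoc, hUU, one_mul]
  set a : n → ℝ := hS.eigenvalues with ha
  have hspec : S = U * diagonal a * star U := by
    have := hS.spectral_theorem
    simpa [hU, ha] using this
  have htrS : ∀ k : ℕ, (S ^ k).trace = ∑ i, (a i) ^ k := by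
    intro k
    have hpow : S ^ k = U * (diagonal a) ^ k * star U := by
      induction k with
      | zero =>
        simp only [pow_zero, Matrix.mul_one, hUU']
      | succ m ih =>
        rw [pow_succ, ih, hspec, pow_succ]
        simp only [Matrix.mul_assoc]
        rw [hcancelU]
    rw [hpow, trace_mul_cycle]
    simp only [Matrix.mul_assoc]
    rw [hcancelU, diagonal_pow, trace_diagonal]
    simp [Pi.pow_apply]
  rw [htr 3, htr 2, htrS 3, htrS 2, abs_mul, abs_neg, abs_two]
  exact mul_le_mul_of_nonneg_left (abs_sum_cube_le_aux a) (by norm_num)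
end

section
/- Let g be the restriction to symmetric matrices of a C¹ function on the real line and let X = UΛUᵀ be a spectral decomposition with Λ = diag(λ₁,...,λₙ). Then for φ_C(X) = Tr(C g(X)) with fixed symmetric C, the gradient (w.r.t. the trace inner product) is ∇φ_C(X) = U( (UᵀCU) ∘ g^{[1]}(Λ) )Uᵀ, where g^{[1]}(Λ) is the matrix of first divided differences [g^{[1]}(Λ)]_{ij} = g^{[1]}(λ_i, λ_j) and ∘ is the entrywise (Schur) product. -/
open Matrix

/-- A function of a symmetric matrix applied spectrally. -/
noncomputable def matFun {n : Type*} [Fintype n] [DecidableEq n]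
    (g : ℝ → ℝ) (A : Matrix n n ℝ) : Matrix n n ℝ :=
  if hA : A.IsHermitian then
    (hA.eigenvectorUnitary : Matrix n n ℝ) * Matrix.diagonal (g ∘ hA.eigenvalues) *
      star (hA.eigenvectorUnitary : Matrix n n ℝ)
  else 0

/-- First divided difference of `g`. -/
noncomputable def dd (g : ℝ → ℝ) (a b : ℝ) : ℝ :=
  if a = b then deriv g a else (g a - g b) / (a - b)

open Finset Polynomial

set_option linter.unusedSectionVars false

section DK

variable {n : Type*} [Fintype n] [DecidableEq n]

lemma pow_decomp (V : Matrix n n ℝ) (hV : V * Vᵀ = 1) (μ : n → ℝ) (k : ℕ) :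
    (V * diagonal μ * Vᵀ) ^ k = V * diagonal (fun i => μ i ^ k) * Vᵀ := by
  have hV' : Vᵀ * V = 1 := mul_eq_one_comm.mp hV
  induction k with
  | zero => simp [pow_zero, hV]
  | succ k ih =>
      rw [pow_succ, ih]
      calc V * diagonal (fun i => μ i ^ k) * Vᵀ * (V * diagonal μ * Vᵀ)
          = V * (diagonal (fun i => μ i ^ k) * diagonal μ) * Vᵀ := by
            rw [show V * diagonal (fun i => μ i ^ k) * Vᵀ * (V * diagonal μ * Vᵀ)
                = V * (diagonal (fun i => μ i ^ k) * ((Vᵀ * V) * diagonal μ)) * Vᵀ by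
              simp only [Matrix.mul_assoc], hV', one_mul]
        _ = V * diagonal (fun i => μ i ^ (k+1)) * Vᵀ := by
            rw [diagonal_mul_diagonal]
            simp [pow_succ]

lemma aeval_decomp (V : Matrix n n ℝ) (hV : V * Vᵀ = 1) (μ : n → ℝ) (p : ℝ[X]) :
    aeval (V * diagonal μ * Vᵀ) p = V * diagonal (fun i => p.eval (μ i)) * Vᵀ := by
  rw [aeval_eq_sum_range]
  have h : ∀ i, p.eval (μ i) = ∑ k ∈ range (p.natDegree + 1), p.coeff k * μ i ^ k := by
    intro i; rw [eval_eq_sum_range]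
  simp_rw [h, pow_decomp V hV]
  have : (diagonal (fun i => ∑ k ∈ range (p.natDegree + 1), p.coeff k * μ i ^ k) : Matrix n n ℝ)
      = ∑ k ∈ range (p.natDegree + 1), p.coeff k • diagonal (fun i => μ i ^ k) := by
    ext i j
    by_cases hij : i = j <;>
      simp [diagonal, hij, Matrix.sum_apply, Finset.mul_sum]
  rw [this, Finset.mul_sum, Finset.sum_mul]
  congr 1
  ext k
  simp [Matrix.mul_smul, Matrix.smul_mul]

lemma isHermitian_real_iff (A : Matrix n n ℝ) : A.IsHermitian ↔ Aᵀ = A := by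
  rw [Matrix.IsHermitian, Matrix.conjTranspose_eq_transpose_of_trivial]

lemma eig_unit_mul (A : Matrix n n ℝ) (hA : A.IsHermitian) :
    (hA.eigenvectorUnitary : Matrix n n ℝ) * (hA.eigenvectorUnitary : Matrix n n ℝ)ᵀ = 1 := by
  have := (Matrix.mem_unitaryGroup_iff).mp hA.eigenvectorUnitary.2
  rwa [Matrix.star_eq_conjTranspose, Matrix.conjTranspose_eq_transpose_of_trivial] at this

lemma spectral_real (A : Matrix n n ℝ) (hA : A.IsHermitian) :
    A = (hA.eigenvectorUnitary : Matrix n n ℝ) * diagonal hA.eigenvalues *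
      (hA.eigenvectorUnitary : Matrix n n ℝ)ᵀ := by
  have := hA.spectral_theorem
  simpa [Matrix.star_eq_conjTranspose, Matrix.conjTranspose_eq_transpose_of_trivial,
    Function.comp] using this

lemma matFun_decomp (g : ℝ → ℝ) (A : Matrix n n ℝ) (hA : A.IsHermitian) :
    matFun g A = (hA.eigenvectorUnitary : Matrix n n ℝ) *
      diagonal (fun i => g (hA.eigenvalues i)) * (hA.eigenvectorUnitary : Matrix n n ℝ)ᵀ := by
  rw [matFun, dif_pos hA, Matrix.star_eq_conjTranspose,
    Matrix.conjTranspose_eq_transpose_of_trivial]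
  rfl

lemma matFun_eval (A : Matrix n n ℝ) (hA : A.IsHermitian) (p : ℝ[X]) :
    matFun (fun x => p.eval x) A = aeval A p := by
  rw [matFun_decomp _ _ hA]
  conv_rhs => rw [spectral_real A hA]
  rw [show (Polynomial.aeval ((hA.eigenvectorUnitary : Matrix n n ℝ) * diagonal hA.eigenvalues *
      (hA.eigenvectorUnitary : Matrix n n ℝ)ᵀ)) p
    = (hA.eigenvectorUnitary : Matrix n n ℝ) * diagonal (fun i => p.eval (hA.eigenvalues i)) *
      (hA.eigenvectorUnitary : Matrix n n ℝ)ᵀ from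
    aeval_decomp _ (eig_unit_mul A hA) _ p]

noncomputable def Dmat (B ξ : Matrix n n ℝ) (k : ℕ) : Matrix n n ℝ :=
  ∑ m ∈ range k, B ^ m * ξ * B ^ (k - 1 - m)

lemma Dmat_succ (B ξ : Matrix n n ℝ) (k : ℕ) :
    Dmat B ξ (k + 1) = Dmat B ξ k * B + B ^ k * ξ := by
  rw [Dmat, Dmat, Finset.sum_range_succ, Finset.sum_mul]
  congr 1
  · apply Finset.sum_congr rfl
    intro m hm
    rw [Finset.mem_range] at hm
    rw [show k + 1 - 1 - m = (k - 1 - m) + 1 by omega, pow_succ]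
    noncomm_ring
  · rw [show k + 1 - 1 - k = 0 by omega, pow_zero, mul_one]

lemma hasDerivAt_pow_entry (B ξ : Matrix n n ℝ) (k : ℕ) (a b : n) :
    HasDerivAt (fun s : ℝ => ((B + s • ξ) ^ k) a b) (Dmat B ξ k a b) 0 := by
  induction k generalizing a b with
  | zero =>
      simp only [pow_zero, Dmat, Finset.range_zero, Finset.sum_empty, Matrix.zero_apply]
      exact hasDerivAt_const 0 _
  | succ k ih =>
      have h1 : ∀ s : ℝ, ((B + s • ξ) ^ (k+1)) a b
          = ∑ c, ((B + s • ξ) ^ k) a c * (B c b + s * ξ c b) := by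
        intro s
        rw [pow_succ, Matrix.mul_apply]
        apply Finset.sum_congr rfl
        intro c _
        simp [Matrix.add_apply, Matrix.smul_apply]
      simp only [h1]
      have h2 : (Dmat B ξ (k+1)) a b
          = ∑ c, (Dmat B ξ k a c * B c b + (B ^ k) a c * ξ c b) := by
        rw [Dmat_succ, Matrix.add_apply, Matrix.mul_apply, Matrix.mul_apply,
          ← Finset.sum_add_distrib]
      rw [h2]
      apply HasDerivAt.fun_sum
      intro c _
      have hf := ih a c
      have hg : HasDerivAt (fun s : ℝ => B c b + s * ξ c b) (ξ c b) 0 := by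
        simpa using ((hasDerivAt_id (0:ℝ)).mul_const (ξ c b)).const_add (B c b)
      have := hf.fun_mul hg
      simpa using this

lemma trace_mul_eq (A M : Matrix n n ℝ) : (A * M).trace = ∑ a, ∑ c, A a c * M c a := by
  simp [Matrix.trace, Matrix.diag, Matrix.mul_apply]

lemma hasDerivAt_trace_pow (C B ξ : Matrix n n ℝ) (k : ℕ) :
    HasDerivAt (fun s : ℝ => (C * (B + s • ξ) ^ k).trace) ((C * Dmat B ξ k).trace) 0 := by
  simp only [trace_mul_eq]
  apply HasDerivAt.fun_sum
  intro a _
  apply HasDerivAt.fun_sum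
  intro c _
  exact (hasDerivAt_pow_entry B ξ k c a).const_mul _

lemma hasDerivAt_trace_aeval (C B ξ : Matrix n n ℝ) (p : ℝ[X]) :
    HasDerivAt (fun s : ℝ => (C * aeval (B + s • ξ) p).trace)
      (∑ k ∈ range (p.natDegree + 1), p.coeff k * (C * Dmat B ξ k).trace) 0 := by
  have h : ∀ s : ℝ, (C * aeval (B + s • ξ) p).trace
      = ∑ k ∈ range (p.natDegree + 1), p.coeff k * (C * (B + s • ξ) ^ k).trace := by
    intro s
    rw [aeval_eq_sum_range, Finset.mul_sum, trace_sum]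
    apply Finset.sum_congr rfl
    intro k _
    rw [Matrix.mul_smul, trace_smul, smul_eq_mul]
  simp only [h]
  exact HasDerivAt.fun_sum fun k _ => (hasDerivAt_trace_pow C B ξ k).const_mul _

lemma trace_PDQD (P Q : Matrix n n ℝ) (d e : n → ℝ) :
    (P * diagonal d * Q * diagonal e).trace
      = ∑ i, ∑ j, P i j * Q j i * (d j * e i) := by
  have h1 : (P * diagonal d * Q * diagonal e).trace = ∑ i, (P * diagonal d * Q) i i * e i := by
    simp [trace_mul_eq, Matrix.diagonal_apply, mul_ite, Finset.sum_ite_eq]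
  rw [h1]
  apply Finset.sum_congr rfl
  intro i _
  rw [Matrix.mul_apply, Finset.sum_mul]
  apply Finset.sum_congr rfl
  intro j _
  rw [Matrix.mul_diagonal]
  ring

lemma trace_conj_diag (C V : Matrix n n ℝ) (d e : n → ℝ) (ξ : Matrix n n ℝ) :
    (C * (V * diagonal d * Vᵀ * ξ * (V * diagonal e * Vᵀ))).trace
      = ∑ i, ∑ j, (Vᵀ * C * V) i j * (Vᵀ * ξ * V) j i * (d j * e i) := by
  have h : C * (V * diagonal d * Vᵀ * ξ * (V * diagonal e * Vᵀ))
      = (C * V) * (diagonal d * (Vᵀ * ξ * V) * diagonal e) * Vᵀ := by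
    simp only [Matrix.mul_assoc]
  rw [h, Matrix.trace_mul_cycle,
    show Vᵀ * (C * V) * (diagonal d * (Vᵀ * ξ * V) * diagonal e)
      = (Vᵀ * C * V) * diagonal d * (Vᵀ * ξ * V) * diagonal e by simp only [Matrix.mul_assoc]]
  exact trace_PDQD _ _ _ _

lemma dd_pow (a b : ℝ) (k : ℕ) :
    (∑ m ∈ range k, b ^ m * a ^ (k - 1 - m)) = dd (fun x => x ^ k) a b := by
  by_cases hab : a = b
  · subst hab
    rw [dd, if_pos rfl, deriv_pow_field]
    rcases Nat.eq_zero_or_pos k with hk | hk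
    · simp [hk]
    · have h2 : ∀ m ∈ range k, a ^ m * a ^ (k - 1 - m) = a ^ (k - 1) := by
        intro m hm
        rw [Finset.mem_range] at hm
        rw [← pow_add]
        congr 1
        omega
      rw [Finset.sum_congr rfl h2, Finset.sum_const, Finset.card_range, nsmul_eq_mul]
  · rw [dd, if_neg hab, eq_div_iff (sub_ne_zero.mpr hab)]
    have := geom_sum₂_mul b a k
    nlinarith [this]

lemma dd_eval (p : ℝ[X]) (a b : ℝ) :
    dd (fun x => p.eval x) a b
      = ∑ k ∈ range (p.natDegree + 1), p.coeff k * dd (fun x => x ^ k) a b := by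
  by_cases hab : a = b
  · subst hab
    simp only [dd, if_pos rfl, if_true]
    rw [Polynomial.deriv]
    have h : ∀ x : ℝ, HasDerivAt (fun y : ℝ => p.eval y)
        (∑ k ∈ range (p.natDegree + 1), p.coeff k * (k * x ^ (k - 1))) x := by
      intro x
      have : ∀ y : ℝ, p.eval y = ∑ k ∈ range (p.natDegree + 1), p.coeff k * y ^ k := by
        intro y; rw [eval_eq_sum_range]
      simp only [this]
      exact HasDerivAt.fun_sum fun k _ => (hasDerivAt_pow k x).const_mul _
    have := (h a).deriv
    rw [Polynomial.deriv] at this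
    rw [this]
    apply Finset.sum_congr rfl
    intro k _
    rw [deriv_pow_field]
  · simp only [dd, if_neg hab]
    rw [eval_eq_sum_range, eval_eq_sum_range, ← Finset.sum_sub_distrib, Finset.sum_div]
    apply Finset.sum_congr rfl
    intro k _
    rw [← mul_sub, mul_div_assoc]

lemma trace_Dmat_decomp (C ξ V : Matrix n n ℝ) (hV : V * Vᵀ = 1) (μ : n → ℝ) (k : ℕ) :
    (C * Dmat (V * diagonal μ * Vᵀ) ξ k).trace
      = ∑ i, ∑ j, (Vᵀ * C * V) i j * (Vᵀ * ξ * V) j i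
          * (∑ m ∈ range k, μ j ^ m * μ i ^ (k - 1 - m)) := by
  rw [Dmat, Finset.mul_sum, trace_sum]
  have h1 : ∀ m ∈ range k,
      (C * ((V * diagonal μ * Vᵀ) ^ m * ξ * (V * diagonal μ * Vᵀ) ^ (k - 1 - m))).trace
      = ∑ i, ∑ j, (Vᵀ * C * V) i j * (Vᵀ * ξ * V) j i * (μ j ^ m * μ i ^ (k - 1 - m)) := by
    intro m _
    rw [pow_decomp V hV, pow_decomp V hV]
    rw [← trace_conj_diag C V (fun i => μ i ^ m) (fun i => μ i ^ (k - 1 - m)) ξ]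
  rw [Finset.sum_congr rfl h1, Finset.sum_comm]
  apply Finset.sum_congr rfl
  intro i _
  rw [Finset.sum_comm]
  apply Finset.sum_congr rfl
  intro j _
  rw [← Finset.mul_sum]

lemma key_hasDerivAt (C ξ V : Matrix n n ℝ) (hV : V * Vᵀ = 1) (μ : n → ℝ) (p : ℝ[X]) :
    HasDerivAt (fun s : ℝ => (C * aeval (V * diagonal μ * Vᵀ + s • ξ) p).trace)
      (∑ i, ∑ j, (Vᵀ * C * V) i j * (Vᵀ * ξ * V) j i
        * dd (fun x => p.eval x) (μ i) (μ j)) 0 := by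
  have h := hasDerivAt_trace_aeval C (V * diagonal μ * Vᵀ) ξ p
  convert h using 1
  simp_rw [trace_Dmat_decomp C ξ V hV μ, dd_pow, dd_eval, Finset.mul_sum]
  rw [eq_comm, Finset.sum_comm]
  apply Finset.sum_congr rfl
  intro a _
  rw [Finset.sum_comm]
  apply Finset.sum_congr rfl
  intro b _
  apply Finset.sum_congr rfl
  intro k _
  ring

end DK

section B2
open intervalIntegral

variable {n : Type*} [Fintype n] [DecidableEq n]

noncomputable def entS (M : Matrix n n ℝ) : ℝ := ∑ a, ∑ b, |M a b|

lemma entS_nonneg (M : Matrix n n ℝ) : 0 ≤ entS M :=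
  Finset.sum_nonneg fun _ _ => Finset.sum_nonneg fun _ _ => abs_nonneg _

lemma entry_le_one (V : Matrix n n ℝ) (hV : Vᵀ * V = 1) (a i : n) : |V a i| ≤ 1 := by
  have h1 : (Vᵀ * V) i i = ∑ c, V c i * V c i := by
    rw [Matrix.mul_apply]; apply Finset.sum_congr rfl; intro c _; rfl
  rw [hV, Matrix.one_apply_eq] at h1
  have h2 : V a i * V a i ≤ 1 := by
    rw [h1]
    exact Finset.single_le_sum (fun c _ => mul_self_nonneg (V c i)) (Finset.mem_univ a)
  exact abs_le_one_iff_mul_self_le_one.mpr h2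

lemma conj_entry_bound (V M : Matrix n n ℝ) (hV : Vᵀ * V = 1) (i j : n) :
    |(Vᵀ * M * V) i j| ≤ entS M := by
  have h : (Vᵀ * M * V) i j = ∑ b, ∑ a, V a i * M a b * V b j := by
    rw [Matrix.mul_apply]
    apply Finset.sum_congr rfl
    intro b _
    rw [Matrix.mul_apply, Finset.sum_mul]
    apply Finset.sum_congr rfl
    intro a _
    rw [Matrix.transpose_apply]
  rw [h]
  calc |∑ b, ∑ a, V a i * M a b * V b j| ≤ ∑ b, ∑ a, |V a i * M a b * V b j| := by
        apply (Finset.abs_sum_le_sum_abs _ _).trans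
        apply Finset.sum_le_sum
        intro a _
        exact Finset.abs_sum_le_sum_abs _ _
    _ ≤ ∑ b, ∑ a, |M a b| := by
        apply Finset.sum_le_sum; intro b _
        apply Finset.sum_le_sum; intro a _
        rw [abs_mul, abs_mul]
        calc |V a i| * |M a b| * |V b j| ≤ 1 * |M a b| * 1 := by
              apply mul_le_mul
              · exact mul_le_mul (entry_le_one V hV a i) le_rfl (abs_nonneg _) zero_le_one
              · exact entry_le_one V hV b j
              · exact abs_nonneg _
              · exact mul_nonneg zero_le_one (abs_nonneg _)
          _ = |M a b| := by ring
    _ = entS M := by rw [entS, Finset.sum_comm]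


lemma dd_bound (f : ℝ → ℝ) (hf : Differentiable ℝ f) (R K : ℝ)
    (hK : ∀ x ∈ Set.Icc (-R) R, |deriv f x| ≤ K)
    (a b : ℝ) (ha : a ∈ Set.Icc (-R) R) (hb : b ∈ Set.Icc (-R) R) : |dd f a b| ≤ K := by
  have key : ∀ u v : ℝ, u < v → u ∈ Set.Icc (-R) R → v ∈ Set.Icc (-R) R →
      |(f u - f v) / (u - v)| ≤ K := by
    intro u v huv hu hv
    obtain ⟨c, hc, hc2⟩ := exists_deriv_eq_slope f huv (hf.continuous.continuousOn)
      (hf.differentiableOn)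
    have hcmem : c ∈ Set.Icc (-R) R :=
      ⟨hu.1.trans hc.1.le, hc.2.le.trans hv.2⟩
    have : (f u - f v) / (u - v) = deriv f c := by
      rw [hc2, ← neg_sub (f v) (f u), ← neg_sub v u, neg_div_neg_eq]
    rw [this]
    exact hK c hcmem
  rcases lt_trichotomy a b with h | h | h
  · rw [dd, if_neg h.ne]
    have := key a b h ha hb
    exact this
  · subst h
    rw [dd, if_pos rfl]
    exact hK a ha
  · rw [dd, if_neg h.ne']
    have := key b a h hb ha
    rw [show (f b - f a) / (b - a) = (f a - f b) / (a - b) by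
      rw [div_eq_div_iff (sub_ne_zero.mpr h.ne) (sub_ne_zero.mpr h.ne')]; ring] at this
    exact this

lemma dd_sub (f g : ℝ → ℝ) (hf : Differentiable ℝ f) (hg : Differentiable ℝ g) (a b : ℝ) :
    dd (fun x => f x - g x) a b = dd f a b - dd g a b := by
  by_cases hab : a = b
  · subst hab
    simp only [dd, if_pos rfl]
    exact deriv_sub (hf a) (hg a)
  · simp only [dd, if_neg hab]
    rw [div_sub_div_same]
    ring_nf


noncomputable def pAnti (q : ℝ[X]) : ℝ[X] :=
  q.sum fun i a => Polynomial.C (a / (i + 1)) * Polynomial.X ^ (i + 1)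

lemma pAnti_derivative (q : ℝ[X]) : (pAnti q).derivative = q := by
  rw [pAnti, Polynomial.sum, map_sum]
  have h : ∀ i ∈ q.support,
      ((Polynomial.C (q.coeff i / (i + 1)) * Polynomial.X ^ (i + 1)).derivative : ℝ[X])
        = Polynomial.C (q.coeff i) * Polynomial.X ^ i := by
    intro i _
    rw [Polynomial.derivative_C_mul_X_pow, Nat.add_sub_cancel]
    congr 1
    push_cast
    rw [div_mul_cancel₀ _ (by positivity : ((i:ℝ) + 1) ≠ 0)]
  rw [Finset.sum_congr rfl h]
  exact q.sum_C_mul_X_pow_eq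

lemma pAnti_eval_zero (q : ℝ[X]) : (pAnti q).eval 0 = 0 := by
  rw [pAnti, Polynomial.sum, Polynomial.eval_finset_sum]
  apply Finset.sum_eq_zero
  intro i _
  simp

lemma ftc_bound (g : ℝ → ℝ) (hg : ContDiff ℝ 1 g) (q : ℝ[X]) (R ε : ℝ)
    (hq : ∀ x ∈ Set.Icc (-R) R, |q.eval x - deriv g x| ≤ ε)
    (x : ℝ) (hx : x ∈ Set.Icc (-R) R) :
    |(pAnti q + Polynomial.C (g 0)).eval x - g x| ≤ ε * R := by
  set p := pAnti q + Polynomial.C (g 0) with hp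
  have hgd : Differentiable ℝ g := hg.differentiable one_ne_zero
  have hgc : Continuous (deriv g) := hg.continuous_deriv le_rfl
  have hR : 0 ≤ R := by
    by_contra hcon
    push_neg at hcon
    have := hx.1.trans hx.2
    linarith
  have h1 : g x - g 0 = ∫ u in (0:ℝ)..x, deriv g u :=
    (integral_deriv_eq_sub (fun y _ => hgd y) (hgc.intervalIntegrable _ _)).symm
  have hpderiv : deriv (fun y : ℝ => p.eval y) = fun y => q.eval y := by
    funext y
    rw [Polynomial.deriv, hp, Polynomial.derivative_add, pAnti_derivative,
      Polynomial.derivative_C, add_zero]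
  have h2 : p.eval x - g 0 = ∫ u in (0:ℝ)..x, q.eval u := by
    have hint : IntervalIntegrable (deriv fun y : ℝ => p.eval y) MeasureTheory.volume 0 x := by
      rw [hpderiv]; exact (q.continuous).intervalIntegrable _ _
    have hftc := integral_deriv_eq_sub (f := fun y : ℝ => p.eval y) (a := 0) (b := x)
      (fun y _ => p.differentiable y) hint
    rw [hpderiv] at hftc
    have hp0 : p.eval 0 = g 0 := by rw [hp]; simp [pAnti_eval_zero]
    rw [← hp0]
    simpa using hftc.symm
  have h3 : p.eval x - g x = ∫ u in (0:ℝ)..x, (q.eval u - deriv g u) := by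
    rw [integral_sub ((q.continuous).intervalIntegrable _ _)
      (hgc.intervalIntegrable _ _), ← h1, ← h2]
    ring
  rw [h3]
  have h4 : ∀ u ∈ Set.uIoc (0:ℝ) x, ‖q.eval u - deriv g u‖ ≤ ε := by
    intro u hu
    apply hq
    have : Set.uIcc (0:ℝ) x ⊆ Set.Icc (-R) R := by
      apply Set.uIcc_subset_Icc ⟨by linarith, hR⟩ hx
    exact this (Set.Ioc_subset_Icc_self hu)
  calc |∫ u in (0:ℝ)..x, (q.eval u - deriv g u)| ≤ ε * |x - 0| :=
        norm_integral_le_of_norm_le_const h4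
    _ ≤ ε * R := by
        apply mul_le_mul_of_nonneg_left _ ?_
        · rw [sub_zero, abs_le]; exact ⟨hx.1, hx.2⟩
        · by_contra hcon
          push_neg at hcon
          have h0 : (0:ℝ) ∈ Set.Icc (-R) R := ⟨by linarith, hR⟩
          have := hq 0 h0
          exact absurd ((abs_nonneg _).trans this) (not_le.mpr hcon)

end B2


section Main
open Filter Topology
variable {n : Type*} [Fintype n] [DecidableEq n]

lemma trace_mul_diagonal_eq (M : Matrix n n ℝ) (d : n → ℝ) :
    (M * diagonal d).trace = ∑ i, M i i * d i := by
  simp [trace_mul_eq, Matrix.diagonal_apply, mul_ite, Finset.sum_ite_eq]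

lemma trace_conj_single (C V : Matrix n n ℝ) (d : n → ℝ) :
    (C * (V * diagonal d * Vᵀ)).trace = ∑ i, (Vᵀ * C * V) i i * d i := by
  rw [show C * (V * diagonal d * Vᵀ) = (C * V) * diagonal d * Vᵀ by simp only [Matrix.mul_assoc],
    Matrix.trace_mul_cycle,
    show Vᵀ * (C * V) * diagonal d = (Vᵀ * C * V) * diagonal d by simp only [Matrix.mul_assoc],
    trace_mul_diagonal_eq]

lemma der_close (C ξ W : Matrix n n ℝ) (hW : Wᵀ * W = 1) (ν : n → ℝ) (R : ℝ)
    (hν : ∀ i, ν i ∈ Set.Icc (-R) R) (g1 g2 : ℝ → ℝ)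
    (hg1 : Differentiable ℝ g1) (hg2 : Differentiable ℝ g2) (ε : ℝ)
    (hd : ∀ x ∈ Set.Icc (-R) R, |deriv g1 x - deriv g2 x| ≤ ε) :
    |(∑ i, ∑ j, (Wᵀ * C * W) i j * (Wᵀ * ξ * W) j i * dd g1 (ν i) (ν j))
      - ∑ i, ∑ j, (Wᵀ * C * W) i j * (Wᵀ * ξ * W) j i * dd g2 (ν i) (ν j)|
      ≤ (Fintype.card n)^2 * (entS C * entS ξ * ε) := by
  rcases isEmpty_or_nonempty n with hn | hn
  · simp [Fintype.card_eq_zero]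
  have hεnn : 0 ≤ ε := (abs_nonneg _).trans (hd (ν (Classical.arbitrary n)) (hν _))
  have hddb : ∀ i j, |dd g1 (ν i) (ν j) - dd g2 (ν i) (ν j)| ≤ ε := by
    intro i j
    rw [← dd_sub g1 g2 hg1 hg2]
    apply dd_bound _ (hg1.sub hg2) R ε _ _ _ (hν i) (hν j)
    intro x hx
    rw [deriv_sub (hg1 x) (hg2 x)]
    exact hd x hx
  rw [← Finset.sum_sub_distrib]
  calc |∑ i, ((∑ j, (Wᵀ * C * W) i j * (Wᵀ * ξ * W) j i * dd g1 (ν i) (ν j))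
          - ∑ j, (Wᵀ * C * W) i j * (Wᵀ * ξ * W) j i * dd g2 (ν i) (ν j))|
      ≤ ∑ i : n, ∑ j : n, entS C * entS ξ * ε := by
        apply (Finset.abs_sum_le_sum_abs _ _).trans
        apply Finset.sum_le_sum
        intro i _
        rw [← Finset.sum_sub_distrib]
        apply (Finset.abs_sum_le_sum_abs _ _).trans
        apply Finset.sum_le_sum
        intro j _
        rw [← mul_sub, abs_mul, abs_mul]
        have h1 := conj_entry_bound W C hW i j
        have h2 := conj_entry_bound W ξ hW j i
        exact mul_le_mul (mul_le_mul h1 h2 (abs_nonneg _) (entS_nonneg C)) (hddb i j)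
          (abs_nonneg _) (mul_nonneg (entS_nonneg C) (entS_nonneg ξ))
    _ = (Fintype.card n)^2 * (entS C * entS ξ * ε) := by
        rw [Finset.sum_const, Finset.sum_const, Finset.card_univ, nsmul_eq_mul, nsmul_eq_mul]
        push_cast
        ring

lemma entS_add_smul_le (X ξ : Matrix n n ℝ) (t : ℝ) :
    entS (X + t • ξ) ≤ entS X + |t| * entS ξ := by
  rw [entS]
  calc ∑ a, ∑ b, |(X + t • ξ) a b| ≤ ∑ a, ∑ b, (|X a b| + |t| * |ξ a b|) := by
        apply Finset.sum_le_sum; intro a _; apply Finset.sum_le_sum; intro b _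
        rw [Matrix.add_apply, Matrix.smul_apply, smul_eq_mul]
        exact (abs_add_le _ _).trans (by rw [abs_mul])
    _ = entS X + |t| * entS ξ := by
        simp [Finset.sum_add_distrib, Finset.mul_sum, entS]

lemma tendsto_aux (a : ℕ → ℝ) (L c : ℝ) (h : ∀ k : ℕ, |L - a k| ≤ c * (1/(k+1))) :
    Filter.Tendsto a Filter.atTop (nhds L) := by
  rw [← tendsto_sub_nhds_zero_iff]
  apply squeeze_zero_norm (a := fun k : ℕ => c * (1/(k+1)))
  · intro k
    rw [Real.norm_eq_abs, abs_sub_comm]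
    exact h k
  · simpa using tendsto_one_div_add_atTop_nhds_zero_nat.const_mul c

lemma trace_target (C U ξ : Matrix n n ℝ) (g : ℝ → ℝ) (lam : n → ℝ) :
    ((U * Matrix.of (fun i j => (Uᵀ * C * U) i j * dd g (lam i) (lam j)) * Uᵀ) * ξ).trace
      = ∑ i, ∑ j, (Uᵀ * C * U) i j * (Uᵀ * ξ * U) j i * dd g (lam i) (lam j) := by
  set M := Matrix.of (fun i j => (Uᵀ * C * U) i j * dd g (lam i) (lam j)) with hM
  rw [show (U * M * Uᵀ) * ξ = U * (M * (Uᵀ * ξ)) by simp only [Matrix.mul_assoc],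
    Matrix.trace_mul_comm,
    show M * (Uᵀ * ξ) * U = M * (Uᵀ * ξ * U) by simp only [Matrix.mul_assoc],
    trace_mul_eq]
  apply Finset.sum_congr rfl
  intro i _
  apply Finset.sum_congr rfl
  intro j _
  rw [hM]
  simp only [Matrix.of_apply]
  ring
end Main

open Filter Topology

/-- For `φ_C(X) = Tr(C g(X))` with `g` C¹ applied spectrally and `X = U Λ Uᵀ` a spectral
decomposition, the gradient with respect to the trace inner product is
`∇φ_C(X) = U ((Uᵀ C U) ∘ g^{[1]}(Λ)) Uᵀ`, where `g^{[1]}(Λ)` is the matrix of first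
divided differences and `∘` the entrywise product: the directional derivative in any
symmetric direction `ξ` equals `Tr(∇φ_C(X) ξ)`. -/
theorem gradient_trace_matFun {n : Type*} [Fintype n] [DecidableEq n]
    (g : ℝ → ℝ) (hg : ContDiff ℝ 1 g)
    (C : Matrix n n ℝ) (hC : Cᵀ = C)
    (U : Matrix n n ℝ) (hU : U * Uᵀ = 1) (lam : n → ℝ)
    (X : Matrix n n ℝ) (hX : X = U * Matrix.diagonal lam * Uᵀ)
    (ξ : Matrix n n ℝ) (hξ : ξᵀ = ξ) :
    HasDerivAt (fun t : ℝ => (C * matFun g (X + t • ξ)).trace)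
      (((U * Matrix.of (fun i j => (Uᵀ * C * U) i j * dd g (lam i) (lam j)) * Uᵀ) * ξ).trace)
      0 := by
  classical
  have hgd : Differentiable ℝ g := hg.differentiable one_ne_zero
  have hgc : Continuous (deriv g) := hg.continuous_deriv le_rfl
  have hU' : Uᵀ * U = 1 := mul_eq_one_comm.mp hU
  have hXt : Xᵀ = X := by
    rw [hX]
    simp [Matrix.transpose_mul, Matrix.diagonal_transpose, Matrix.mul_assoc]
  have hA : ∀ t : ℝ, (X + t • ξ).IsHermitian := by
    intro t
    rw [isHermitian_real_iff, Matrix.transpose_add, Matrix.transpose_smul, hXt, hξ]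
  set V : ℝ → Matrix n n ℝ := fun t => ((hA t).eigenvectorUnitary : Matrix n n ℝ) with hVdef
  set μ : ℝ → n → ℝ := fun t => (hA t).eigenvalues with hμdef
  have hVmul : ∀ t, V t * (V t)ᵀ = 1 := fun t => eig_unit_mul _ (hA t)
  have hVmul' : ∀ t, (V t)ᵀ * V t = 1 := fun t => mul_eq_one_comm.mp (hVmul t)
  have hdecomp : ∀ t, X + t • ξ = V t * diagonal (μ t) * (V t)ᵀ := fun t => spectral_real _ (hA t)
  set R : ℝ := entS X + entS ξ with hRdef
  have hentξ : 0 ≤ entS ξ := entS_nonneg ξ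
  have hentX : 0 ≤ entS X := entS_nonneg X
  have hdiagV : ∀ t, (V t)ᵀ * (X + t • ξ) * V t = diagonal (μ t) := by
    intro t
    rw [hdecomp t,
      show (V t)ᵀ * (V t * diagonal (μ t) * (V t)ᵀ) * V t
        = ((V t)ᵀ * V t) * diagonal (μ t) * ((V t)ᵀ * V t) by simp only [Matrix.mul_assoc],
      hVmul' t, one_mul, mul_one]
  have hμmem : ∀ t ∈ Set.Ioo (-1:ℝ) 1, ∀ i, μ t i ∈ Set.Icc (-R) R := by
    intro t ht i
    have h1 : μ t i = ((V t)ᵀ * (X + t • ξ) * V t) i i := by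
      rw [hdiagV t, Matrix.diagonal_apply_eq]
    have h2 : |μ t i| ≤ entS (X + t • ξ) := by
      rw [h1]; exact conj_entry_bound (V t) _ (hVmul' t) i i
    have h3 : entS (X + t • ξ) ≤ R := by
      refine (entS_add_smul_le X ξ t).trans ?_
      rw [hRdef]
      have : |t| ≤ 1 := by
        rw [abs_le]; exact ⟨ht.1.le, ht.2.le⟩
      nlinarith
    rw [Set.mem_Icc, ← abs_le]
    exact h2.trans h3
  have hdiagU : Uᵀ * X * U = diagonal lam := by
    rw [hX, show Uᵀ * (U * diagonal lam * Uᵀ) * U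
        = (Uᵀ * U) * diagonal lam * (Uᵀ * U) by simp only [Matrix.mul_assoc],
      hU', one_mul, mul_one]
  have hlam : ∀ i, lam i ∈ Set.Icc (-R) R := by
    intro i
    have h1 : lam i = (Uᵀ * X * U) i i := by rw [hdiagU, Matrix.diagonal_apply_eq]
    have h2 : |lam i| ≤ entS X := by rw [h1]; exact conj_entry_bound U _ hU' i i
    rw [Set.mem_Icc, ← abs_le]
    exact h2.trans (by rw [hRdef]; linarith)
  -- Weierstrass approximation of deriv g
  have hqex : ∀ k : ℕ, ∃ q : Polynomial ℝ,
      ∀ x ∈ Set.Icc (-R) R, |q.eval x - deriv g x| ≤ 1/(k+1) := by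
    intro k
    obtain ⟨q, hq⟩ := exists_polynomial_near_continuousMap (-R) R
      ⟨fun x : Set.Icc (-R) R => deriv g x, hgc.comp continuous_subtype_val⟩
      (1/(k+1)) (by positivity)
    refine ⟨q, fun x hx => ?_⟩
    have h1 := ContinuousMap.norm_coe_le_norm
      (q.toContinuousMapOn _ - ⟨fun x : Set.Icc (-R) R => deriv g x,
        hgc.comp continuous_subtype_val⟩) ⟨x, hx⟩
    have h2 : ((q.toContinuousMapOn (Set.Icc (-R) R) - ⟨fun x : Set.Icc (-R) R => deriv g x,
        hgc.comp continuous_subtype_val⟩) ⟨x, hx⟩) = q.eval x - deriv g x := by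
      simp [Polynomial.toContinuousMapOn, Polynomial.toContinuousMap]
    rw [h2, Real.norm_eq_abs] at h1
    exact h1.trans hq.le
  choose q hq using hqex
  set p : ℕ → Polynomial ℝ := fun k => pAnti (q k) + Polynomial.C (g 0) with hpdef
  have hpd : ∀ k, Polynomial.derivative (p k) = q k := by
    intro k
    rw [hpdef]
    simp [pAnti_derivative]
  have hder : ∀ k, deriv (fun y : ℝ => (p k).eval y) = fun y => (q k).eval y := by
    intro k
    funext y
    rw [Polynomial.deriv, hpd]
  have hdclose : ∀ (k : ℕ), ∀ x ∈ Set.Icc (-R) R,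
      |deriv g x - deriv (fun y : ℝ => (p k).eval y) x| ≤ 1/(k+1) := by
    intro k x hx
    rw [hder k, abs_sub_comm]
    exact hq k x hx
  have hclose : ∀ (k : ℕ), ∀ x ∈ Set.Icc (-R) R, |(p k).eval x - g x| ≤ (1/(k+1)) * R := by
    intro k x hx
    exact ftc_bound g hg (q k) R (1/(k+1)) (hq k) x hx
  -- the derivative formula functions
  set F' : ℕ → ℝ → ℝ := fun k t => ∑ i, ∑ j, ((V t)ᵀ * C * V t) i j * ((V t)ᵀ * ξ * V t) j i
    * dd (fun x => (p k).eval x) (μ t i) (μ t j) with hF'def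
  set G' : ℝ → ℝ := fun t => ∑ i, ∑ j, ((V t)ᵀ * C * V t) i j * ((V t)ᵀ * ξ * V t) j i
    * dd g (μ t i) (μ t j) with hG'def
  set fk : ℕ → ℝ → ℝ := fun k t =>
    (C * matFun (fun x => (p k).eval x) (X + t • ξ)).trace with hfkdef
  have claim1 : ∀ (k : ℕ) (t : ℝ), HasDerivAt (fk k) (F' k t) t := by
    intro k t
    have hkey := key_hasDerivAt C ξ (V t) (hVmul t) (μ t) (p k)
    have h0 : (0:ℝ) = t - t := (sub_self t).symm
    rw [h0] at hkey
    have hcomp : HasDerivAt (fun s : ℝ => s - t) 1 t := (hasDerivAt_id t).sub_const t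
    have hc := HasDerivAt.comp (x := t) (h := fun s : ℝ => s - t) hkey hcomp
    rw [mul_one] at hc
    have heq : fk k = (fun u : ℝ =>
        (C * (Polynomial.aeval (V t * diagonal (μ t) * (V t)ᵀ + u • ξ)) (p k)).trace)
        ∘ (fun s : ℝ => s - t) := by
      funext s
      simp only [Function.comp_apply, hfkdef]
      rw [matFun_eval _ (hA s) (p k), ← hdecomp t,
        show X + t • ξ + (s - t) • ξ = X + s • ξ by rw [sub_smul]; abel]
    rw [heq]
    exact hc
  set K : ℝ := (Fintype.card n)^2 * (entS C * entS ξ) with hKdef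
  have hbound : ∀ (k : ℕ), ∀ (W : Matrix n n ℝ), Wᵀ * W = 1 → ∀ (ν : n → ℝ),
      (∀ i, ν i ∈ Set.Icc (-R) R) →
      |(∑ i, ∑ j, (Wᵀ * C * W) i j * (Wᵀ * ξ * W) j i * dd g (ν i) (ν j))
        - ∑ i, ∑ j, (Wᵀ * C * W) i j * (Wᵀ * ξ * W) j i
            * dd (fun x => (p k).eval x) (ν i) (ν j)|
        ≤ K * (1/(k+1)) := by
    intro k W hW ν hν
    have := der_close C ξ W hW ν R hν g (fun x => (p k).eval x) hgd
      ((p k).differentiable) (1/(k+1)) (hdclose k)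
    calc _ ≤ ((Fintype.card n:ℝ))^2 * (entS C * entS ξ * (1/(k+1))) := this
      _ = K * (1/(k+1)) := by rw [hKdef]; ring
  have claim2 : TendstoUniformlyOn F' G' atTop (Set.Ioo (-1:ℝ) 1) := by
    rw [Metric.tendstoUniformlyOn_iff]
    intro ε hε
    have hKt : Tendsto (fun k : ℕ => K * (1/(k+1))) atTop (𝓝 0) := by
      simpa using tendsto_one_div_add_atTop_nhds_zero_nat.const_mul K
    filter_upwards [hKt.eventually_lt_const hε] with k hk t ht
    rw [Real.dist_eq]
    exact lt_of_le_of_lt (hbound k (V t) (hVmul' t) (μ t) (hμmem t ht)) hk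
  have claim3 : ∀ t ∈ Set.Ioo (-1:ℝ) 1,
      Tendsto (fun k => fk k t) atTop (𝓝 ((C * matFun g (X + t • ξ)).trace)) := by
    intro t ht
    apply tendsto_aux _ _ ((Fintype.card n) * entS C * R)
    intro k
    have hdiff : matFun g (X + t • ξ) - matFun (fun x => (p k).eval x) (X + t • ξ)
        = V t * diagonal (fun i => g (μ t i) - (p k).eval (μ t i)) * (V t)ᵀ := by
      rw [matFun_decomp _ _ (hA t), matFun_decomp _ _ (hA t)]
      rw [show (diagonal (fun i => g (μ t i) - (p k).eval (μ t i)) : Matrix n n ℝ)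
          = diagonal (fun i => g (μ t i)) - diagonal (fun i => (p k).eval (μ t i)) by
        rw [diagonal_sub]]
      rw [Matrix.mul_sub, Matrix.sub_mul]
    have h1 : (C * matFun g (X + t • ξ)).trace - fk k t
        = ∑ i, ((V t)ᵀ * C * V t) i i * (g (μ t i) - (p k).eval (μ t i)) := by
      rw [hfkdef]
      simp only
      rw [← trace_sub, ← Matrix.mul_sub, hdiff, trace_conj_single]
    rw [h1]
    calc |∑ i, ((V t)ᵀ * C * V t) i i * (g (μ t i) - (p k).eval (μ t i))|
        ≤ ∑ i : n, entS C * ((1/(k+1)) * R) := by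
          apply (Finset.abs_sum_le_sum_abs _ _).trans
          apply Finset.sum_le_sum
          intro i _
          rw [abs_mul]
          apply mul_le_mul (conj_entry_bound (V t) C (hVmul' t) i i) _ (abs_nonneg _)
            (entS_nonneg C)
          rw [abs_sub_comm]
          exact hclose k (μ t i) (hμmem t ht i)
      _ ≤ (Fintype.card n) * entS C * R * (1/(k+1)) := by
          rw [Finset.sum_const, Finset.card_univ, nsmul_eq_mul]
          have : (0:ℝ) ≤ entS C := entS_nonneg C
          have hRnn : (0:ℝ) ≤ R := by rw [hRdef]; linarith
          have : ((Fintype.card n : ℝ)) * (entS C * (1/(k+1) * R))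
              = (Fintype.card n) * entS C * R * (1/(k+1)) := by ring
          rw [this]
  have claim4 : HasDerivAt (fun t : ℝ => (C * matFun g (X + t • ξ)).trace) (G' 0) 0 := by
    apply hasDerivAt_of_tendstoUniformlyOn isOpen_Ioo claim2
      (Eventually.of_forall (fun k t _ => claim1 k t)) claim3
    constructor <;> norm_num
  have hXzero : X + (0:ℝ) • ξ = X := by simp
  have hequal : ∀ k : ℕ, F' k 0 = ∑ i, ∑ j, (Uᵀ * C * U) i j * (Uᵀ * ξ * U) j i
      * dd (fun x => (p k).eval x) (lam i) (lam j) := by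
    intro k
    have hk1 := key_hasDerivAt C ξ (V 0) (hVmul 0) (μ 0) (p k)
    have hk2 := key_hasDerivAt C ξ U hU lam (p k)
    rw [← hdecomp 0, hXzero] at hk1
    rw [← hX] at hk2
    exact hk1.unique hk2
  have h0mem : (0:ℝ) ∈ Set.Ioo (-1:ℝ) 1 := by constructor <;> norm_num
  have hlim1 : Tendsto (fun k => F' k 0) atTop (𝓝 (G' 0)) := by
    apply tendsto_aux _ _ K
    intro k
    exact hbound k (V 0) (hVmul' 0) (μ 0) (hμmem 0 h0mem)
  have hlim2 : Tendsto (fun k => F' k 0) atTop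
      (𝓝 (∑ i, ∑ j, (Uᵀ * C * U) i j * (Uᵀ * ξ * U) j i * dd g (lam i) (lam j))) := by
    apply tendsto_aux _ _ K
    intro k
    rw [hequal k]
    exact hbound k U hU' lam hlam
  have claim5 : G' 0 = ∑ i, ∑ j, (Uᵀ * C * U) i j * (Uᵀ * ξ * U) j i
      * dd g (lam i) (lam j) := tendsto_nhds_unique hlim1 hlim2
  rw [trace_target, ← claim5]
  exact claim4
end

section
/- For a κ-self-concordant function F with positive definite Hessian on an open convex set Ω with F(x) → +∞ as x → ∂Ω, and any x ∈ Ω, the Dikin ellipsoid W_ρ(x) = { y : ⟨H_F(x)(y−x), y−x⟩^{1/2} ≤ ρ } is contained in Ω for every ρ < 1/κ. -/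
open Filter Topology

/-- Dikin ellipsoid theorem: for a `κ`-self-concordant function `F` with positive
definite Hessian on an open convex set `Ω`, with `F(x) → +∞` as `x → ∂Ω`, and any
`x ∈ Ω`, the Dikin ellipsoid `W_ρ(x) = { y : ⟨H_F(x)(y−x), y−x⟩^{1/2} ≤ ρ }`
(with `⟨H_F(x)ξ, ξ⟩ = D²F(x)(ξ,ξ)`) is contained in `Ω` for every `ρ < 1/κ`. -/
theorem dikin_ellipsoid_subset
    {E : Type*} [NormedAddCommGroup E] [InnerProductSpace ℝ E] [FiniteDimensional ℝ E]
    (Ω : Set E) (hΩ : IsOpen Ω) (hΩconv : Convex ℝ Ω)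
    (F : E → ℝ) (κ : ℝ) (hκ : 0 ≤ κ)
    (hF : ContDiffOn ℝ 3 F Ω)
    -- `F` is `κ`-self-concordant on `Ω`
    (hsc : ∀ x ∈ Ω, ∀ ξ : E,
      |iteratedFDeriv ℝ 3 F x ![ξ, ξ, ξ]| ≤
        2 * κ * (iteratedFDeriv ℝ 2 F x ![ξ, ξ]) ^ (3/2 : ℝ))
    -- the Hessian of `F` is positive definite on `Ω`
    (hpos : ∀ x ∈ Ω, ∀ ξ : E, ξ ≠ 0 → 0 < iteratedFDeriv ℝ 2 F x ![ξ, ξ])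
    -- `F(x) → +∞` as `x` approaches the boundary of `Ω`
    (hbd : ∀ y ∈ frontier Ω, Tendsto F (nhdsWithin y Ω) atTop) :
    ∀ x ∈ Ω, ∀ ρ : ℝ, ρ < 1 / κ →
      {y : E | Real.sqrt (iteratedFDeriv ℝ 2 F x ![y - x, y - x]) ≤ ρ} ⊆ Ω := by
  intro x hx ρ hρ y hy
  simp only [Set.mem_setOf_eq] at hy
  by_contra hyΩ
  set h : E := y - x with hhdef
  have hne : h ≠ 0 := by
    intro h0
    rw [hhdef, sub_eq_zero] at h0
    exact hyΩ (by rw [h0]; exact hx)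
  have hQ : 0 < iteratedFDeriv ℝ 2 F x ![h, h] := hpos x hx h hne
  set r : ℝ := Real.sqrt (iteratedFDeriv ℝ 2 F x ![h, h]) with hrdef
  have hrpos : 0 < r := Real.sqrt_pos.2 hQ
  have hρpos : 0 < ρ := lt_of_lt_of_le hrpos hy
  have hκpos : 0 < κ := by
    rcases hκ.lt_or_eq with h' | h'
    · exact h'
    · rw [← h', div_zero] at hρ; linarith
  have hκr : κ * r < 1 := by
    have h1 : κ * ρ < κ * (1 / κ) := by
      exact mul_lt_mul_of_pos_left hρ hκpos
    rw [mul_one_div, div_self hκpos.ne'] at h1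
    calc κ * r ≤ κ * ρ := mul_le_mul_of_nonneg_left hy hκpos.le
      _ < 1 := h1
  -- the line through x in direction h
  set c : ℝ → E := fun t => x + t • h with hcdef
  have hc0 : c 0 = x := by rw [hcdef]; simp
  have hc1 : c 1 = y := by rw [hcdef]; simp [hhdef]
  have hccont : Continuous c := by
    rw [hcdef]; exact continuous_const.add (continuous_id.smul continuous_const)
  -- key derivative lemma along the line
  have hkey : ∀ n : ℕ, n < 3 → ∀ (m : Fin n → E), ∀ t : ℝ, c t ∈ Ω →
      HasDerivAt (fun s : ℝ => iteratedFDeriv ℝ n F (c s) m)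
        (iteratedFDeriv ℝ (n+1) F (c t) (Fin.cons h m)) t := by
    intro n hn m t hct
    have hdiff : DifferentiableAt ℝ (iteratedFDeriv ℝ n F) (c t) := by
      have h1 : DifferentiableOn ℝ (iteratedFDerivWithin ℝ n F Ω) Ω :=
        hF.differentiableOn_iteratedFDerivWithin (by exact_mod_cast hn) hΩ.uniqueDiffOn
      have h2 : DifferentiableOn ℝ (iteratedFDeriv ℝ n F) Ω :=
        h1.congr fun w hw => (iteratedFDerivWithin_of_isOpen n hΩ hw).symm
      exact h2.differentiableAt (hΩ.mem_nhds hct)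
    have hcd : HasDerivAt c h t := by
      rw [hcdef]
      simpa using ((hasDerivAt_id t).smul_const h).const_add x
    have h1 : HasDerivAt (fun s : ℝ => iteratedFDeriv ℝ n F (c s))
        (fderiv ℝ (iteratedFDeriv ℝ n F) (c t) h) t :=
      hdiff.hasFDerivAt.comp_hasDerivAt t hcd
    have h2 := ((ContinuousMultilinearMap.apply ℝ (fun _ : Fin n => E) ℝ
      m).hasFDerivAt).comp_hasDerivAt t h1
    have h3 : iteratedFDeriv ℝ (n+1) F (c t) (Fin.cons h m)
        = fderiv ℝ (iteratedFDeriv ℝ n F) (c t) h m := by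
      rw [iteratedFDeriv_succ_apply_left]
      simp [Fin.tail_cons]
    rw [h3]; exact h2
  -- the directional derivative functions
  set g1 : ℝ → ℝ := fun t => iteratedFDeriv ℝ 1 F (c t) ![h] with hg1def
  set g2 : ℝ → ℝ := fun t => iteratedFDeriv ℝ 2 F (c t) ![h, h] with hg2def
  set g3 : ℝ → ℝ := fun t => iteratedFDeriv ℝ 3 F (c t) ![h, h, h] with hg3def
  have hgd : ∀ t : ℝ, c t ∈ Ω → HasDerivAt (fun s => F (c s)) (g1 t) t := by
    intro t ht
    have h0 := hkey 0 (by norm_num) ![] t ht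
    have heqf : (fun s : ℝ => iteratedFDeriv ℝ 0 F (c s) ![]) = fun s => F (c s) := by
      funext s; simp
    rw [heqf] at h0
    exact h0
  have hg1d : ∀ t : ℝ, c t ∈ Ω → HasDerivAt g1 (g2 t) t := by
    intro t ht
    exact hkey 1 (by norm_num) ![h] t ht
  have hg2d : ∀ t : ℝ, c t ∈ Ω → HasDerivAt g2 (g3 t) t := by
    intro t ht
    exact hkey 2 (by norm_num) ![h, h] t ht
  have hg2pos : ∀ t : ℝ, c t ∈ Ω → 0 < g2 t := fun t ht => hpos _ ht h hne
  have hg3le : ∀ t : ℝ, c t ∈ Ω → |g3 t| ≤ 2 * κ * (g2 t) ^ (3/2 : ℝ) :=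
    fun t ht => hsc _ ht h
  -- inverse square root of the second derivative
  set θ : ℝ → ℝ := fun t => (Real.sqrt (g2 t))⁻¹ with hθdef
  have hθd : ∀ t : ℝ, c t ∈ Ω →
      HasDerivAt θ (-(1 / (2 * Real.sqrt (g2 t)) * g3 t) / (g2 t)) t := by
    intro t ht
    have hq := hg2pos t ht
    have hs : HasDerivAt (fun s => Real.sqrt (g2 s)) (1 / (2 * Real.sqrt (g2 t)) * g3 t) t :=
      (Real.hasDerivAt_sqrt hq.ne').comp t (hg2d t ht)
    have hinv := hs.inv (Real.sqrt_pos.2 hq).ne'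
    rw [Real.sq_sqrt hq.le] at hinv
    rw [hθdef]
    exact hinv
  have hθbound : ∀ t : ℝ, c t ∈ Ω →
      |(-(1 / (2 * Real.sqrt (g2 t)) * g3 t) / (g2 t))| ≤ κ := by
    intro t ht
    have hq := hg2pos t ht
    have hsq : 0 < Real.sqrt (g2 t) := Real.sqrt_pos.2 hq
    have h32 : (g2 t) ^ (3/2 : ℝ) = g2 t * Real.sqrt (g2 t) := by
      rw [Real.sqrt_eq_rpow, show (3/2 : ℝ) = 1 + 1/2 by norm_num, Real.rpow_add hq,
        Real.rpow_one]
    have key : |g3 t| ≤ 2 * κ * (g2 t * Real.sqrt (g2 t)) := by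
      rw [← h32]; exact hg3le t ht
    rw [abs_div, abs_neg, abs_mul, abs_of_pos hq,
      abs_of_pos (by positivity : (0:ℝ) < 1 / (2 * Real.sqrt (g2 t))),
      div_le_iff₀ hq, one_div_mul_eq_div, div_le_iff₀ (by positivity : (0:ℝ) < 2 * Real.sqrt (g2 t))]
    calc |g3 t| ≤ 2 * κ * (g2 t * Real.sqrt (g2 t)) := key
      _ = κ * g2 t * (2 * Real.sqrt (g2 t)) := by ring
  -- the exit time
  set T : Set ℝ := {t | t ∈ Set.Icc (0:ℝ) 1 ∧ c t ∈ Ω} with hTdef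
  have hT0 : (0:ℝ) ∈ T := ⟨⟨le_refl 0, zero_le_one⟩, by rw [hc0]; exact hx⟩
  have hTbdd : BddAbove T := ⟨1, fun t ht => ht.1.2⟩
  set t₀ : ℝ := sSup T with ht₀def
  have ht₀le1 : t₀ ≤ 1 := csSup_le ⟨0, hT0⟩ fun t ht => ht.1.2
  have ht₀pos : 0 < t₀ := by
    have hmem : c ⁻¹' Ω ∈ 𝓝 (0:ℝ) := (hΩ.preimage hccont).mem_nhds (by show c 0 ∈ Ω; rw [hc0]; exact hx)
    obtain ⟨ε, hεpos, hball⟩ := Metric.mem_nhds_iff.1 hmem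
    have hτ : min (ε/2) 1 ∈ T := by
      refine ⟨⟨by positivity, min_le_right _ _⟩, ?_⟩
      apply hball
      rw [Metric.mem_ball, Real.dist_eq, sub_zero, abs_of_pos (by positivity)]
      calc min (ε/2) 1 ≤ ε/2 := min_le_left _ _
        _ < ε := by linarith
    calc (0:ℝ) < min (ε/2) 1 := by positivity
      _ ≤ t₀ := le_csSup hTbdd hτ
  have hseg : ∀ t : ℝ, 0 ≤ t → t < t₀ → c t ∈ Ω := by
    intro t ht0 htlt
    obtain ⟨u, huT, htu⟩ := exists_lt_of_lt_csSup ⟨0, hT0⟩ htlt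
    have hu0 : 0 < u := lt_of_le_of_lt ht0 htu
    have hcomb := hΩconv hx huT.2 (by rw [sub_nonneg, div_le_one hu0]; exact htu.le)
      (by positivity) (by ring : (1 - t/u) + t/u = 1)
    have heq : (1 - t/u) • x + (t/u) • (c u) = c t := by
      rw [hcdef]
      show (1 - t/u) • x + (t/u) • (x + u • h) = x + t • h
      rw [smul_add, smul_smul, div_mul_cancel₀ _ hu0.ne']
      module
    rw [heq] at hcomb
    exact hcomb
  have hct₀ : c t₀ ∉ Ω := by
    intro hmem
    have hmem' : c ⁻¹' Ω ∈ 𝓝 t₀ := (hΩ.preimage hccont).mem_nhds hmem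
    obtain ⟨ε, hεpos, hball⟩ := Metric.mem_nhds_iff.1 hmem'
    rcases lt_or_eq_of_le ht₀le1 with hlt | heq1
    · set t₂ : ℝ := min (t₀ + ε/2) ((t₀+1)/2) with ht₂def
      have ht₂gt : t₀ < t₂ := lt_min (by linarith) (by linarith)
      have ht₂le1 : t₂ ≤ 1 := le_trans (min_le_right _ _) (by linarith)
      have ht₂T : t₂ ∈ T := by
        refine ⟨⟨le_trans ht₀pos.le ht₂gt.le, ht₂le1⟩, ?_⟩
        apply hball
        rw [Metric.mem_ball, Real.dist_eq, abs_of_nonneg (by linarith)]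
        have hm := min_le_left (t₀ + ε/2) ((t₀+1)/2)
        linarith
      exact absurd (le_csSup hTbdd ht₂T) (not_le.2 ht₂gt)
    · rw [heq1, hc1] at hmem
      exact hyΩ hmem
  have htends : Tendsto c (𝓝[<] t₀) (𝓝 (c t₀)) :=
    (hccont.continuousAt).tendsto.mono_left nhdsWithin_le_nhds
  have hev : ∀ᶠ t in 𝓝[<] t₀, c t ∈ Ω := by
    have h1 : ∀ᶠ t in 𝓝[<] t₀, 0 < t :=
      eventually_nhdsWithin_of_eventually_nhds (eventually_gt_nhds ht₀pos)
    have h2 : ∀ᶠ t in 𝓝[<] t₀, t < t₀ := eventually_mem_nhdsWithin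
    filter_upwards [h1, h2] with t ht1 ht2
    exact hseg t ht1.le ht2
  have hfront : c t₀ ∈ frontier Ω := by
    rw [frontier, hΩ.interior_eq]
    exact ⟨mem_closure_of_tendsto htends hev, hct₀⟩
  have hFtends : Tendsto (fun t => F (c t)) (𝓝[<] t₀) atTop :=
    (hbd _ hfront).comp (tendsto_nhdsWithin_iff.2 ⟨htends, hev⟩)
  -- quantitative bounds on [0, t₀)
  have hicc : ∀ t : ℝ, 0 ≤ t → t < t₀ → ∀ u ∈ Set.Icc (0:ℝ) t, c u ∈ Ω := fun t ht0 htlt u hu =>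
    hseg u hu.1 (lt_of_le_of_lt hu.2 htlt)
  set δ : ℝ := r⁻¹ - κ with hδdef
  have hδpos : 0 < δ := by
    rw [hδdef, sub_pos, ← one_div, lt_div_iff₀ hrpos]
    linarith
  have hθ0 : θ 0 = r⁻¹ := by
    rw [hθdef]
    show (Real.sqrt (g2 0))⁻¹ = r⁻¹
    rw [hg2def]
    show (Real.sqrt (iteratedFDeriv ℝ 2 F (c 0) ![h, h]))⁻¹ = r⁻¹
    rw [hc0, hrdef]
  have hθlb : ∀ t : ℝ, 0 ≤ t → t < t₀ → δ ≤ θ t := by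
    intro t ht0 htlt
    have hmvt := Convex.norm_image_sub_le_of_norm_hasDerivWithin_le
      (f := θ) (f' := fun u => -(1 / (2 * Real.sqrt (g2 u)) * g3 u) / (g2 u))
      (s := Set.Icc 0 t)
      (fun u hu => (hθd u (hicc t ht0 htlt u hu)).hasDerivWithinAt)
      (fun u hu => by rw [Real.norm_eq_abs]; exact hθbound u (hicc t ht0 htlt u hu))
      (convex_Icc 0 t) (Set.left_mem_Icc.2 ht0) (Set.right_mem_Icc.2 ht0)
    rw [Real.norm_eq_abs, Real.norm_eq_abs, sub_zero, abs_of_nonneg ht0] at hmvt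
    have h1 : θ 0 - θ t ≤ κ * t := le_trans (le_abs_self _) (by rwa [abs_sub_comm] at hmvt)
    have ht1 : t ≤ 1 := le_trans htlt.le ht₀le1
    have h2 : κ * t ≤ κ := mul_le_of_le_one_right hκ ht1
    rw [hθ0] at h1
    rw [hδdef]
    linarith
  set M : ℝ := (δ⁻¹) ^ 2 with hMdef
  have hMpos : 0 < M := by rw [hMdef]; positivity
  have hg2ub : ∀ t : ℝ, 0 ≤ t → t < t₀ → g2 t ≤ M := by
    intro t ht0 htlt
    have hq := hg2pos t (hseg t ht0 htlt)
    have hsq : 0 < Real.sqrt (g2 t) := Real.sqrt_pos.2 hq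
    have hθt : δ ≤ (Real.sqrt (g2 t))⁻¹ := hθlb t ht0 htlt
    have hle : Real.sqrt (g2 t) ≤ δ⁻¹ := by
      have h1 : Real.sqrt (g2 t) * δ ≤ Real.sqrt (g2 t) * (Real.sqrt (g2 t))⁻¹ :=
        mul_le_mul_of_nonneg_left hθt hsq.le
      rw [mul_inv_cancel₀ hsq.ne'] at h1
      rw [← one_div, le_div_iff₀ hδpos]
      linarith [mul_comm (Real.sqrt (g2 t)) δ]
    calc g2 t = Real.sqrt (g2 t) ^ 2 := (Real.sq_sqrt hq.le).symm
      _ ≤ (δ⁻¹) ^ 2 := pow_le_pow_left₀ hsq.le hle 2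
      _ = M := by rw [hMdef]
  set C1 : ℝ := |g1 0| + M with hC1def
  have hg1ub : ∀ t : ℝ, 0 ≤ t → t < t₀ → |g1 t| ≤ C1 := by
    intro t ht0 htlt
    have hmvt := Convex.norm_image_sub_le_of_norm_hasDerivWithin_le
      (f := g1) (f' := g2) (s := Set.Icc 0 t)
      (fun u hu => (hg1d u (hicc t ht0 htlt u hu)).hasDerivWithinAt)
      (fun u hu => by
        rw [Real.norm_eq_abs, abs_of_pos (hg2pos u (hicc t ht0 htlt u hu))]
        exact hg2ub u hu.1 (lt_of_le_of_lt hu.2 htlt))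
      (convex_Icc 0 t) (Set.left_mem_Icc.2 ht0) (Set.right_mem_Icc.2 ht0)
    rw [Real.norm_eq_abs, Real.norm_eq_abs, sub_zero, abs_of_nonneg ht0] at hmvt
    have ht1 : t ≤ 1 := le_trans htlt.le ht₀le1
    have h1 : |g1 t| - |g1 0| ≤ M * t := le_trans (abs_sub_abs_le_abs_sub _ _) hmvt
    have h2 : M * t ≤ M := mul_le_of_le_one_right hMpos.le ht1
    rw [hC1def]
    linarith
  have hC1pos : 0 ≤ C1 := by rw [hC1def]; positivity
  have hgub : ∀ t : ℝ, 0 ≤ t → t < t₀ → F (c t) ≤ F (c 0) + C1 := by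
    intro t ht0 htlt
    have hmvt := Convex.norm_image_sub_le_of_norm_hasDerivWithin_le
      (f := fun s => F (c s)) (f' := g1) (s := Set.Icc 0 t)
      (fun u hu => (hgd u (hicc t ht0 htlt u hu)).hasDerivWithinAt)
      (fun u hu => by
        rw [Real.norm_eq_abs]
        exact hg1ub u hu.1 (lt_of_le_of_lt hu.2 htlt))
      (convex_Icc 0 t) (Set.left_mem_Icc.2 ht0) (Set.right_mem_Icc.2 ht0)
    rw [Real.norm_eq_abs, Real.norm_eq_abs, sub_zero, abs_of_nonneg ht0] at hmvt
    have ht1 : t ≤ 1 := le_trans htlt.le ht₀le1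
    have h1 : F (c t) - F (c 0) ≤ C1 * t := le_trans (le_abs_self _) hmvt
    have h2 : C1 * t ≤ C1 := mul_le_of_le_one_right hC1pos ht1
    linarith
  -- contradiction with F → ∞ at the boundary
  have hev2 : ∀ᶠ t in 𝓝[<] t₀, F (c 0) + C1 < F (c t) :=
    hFtends.eventually (eventually_gt_atTop _)
  have hev3 : ∀ᶠ t in 𝓝[<] t₀, 0 < t :=
    eventually_nhdsWithin_of_eventually_nhds (eventually_gt_nhds ht₀pos)
  have hev4 : ∀ᶠ t in 𝓝[<] t₀, t < t₀ := eventually_mem_nhdsWithin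
  obtain ⟨t, ht2, ht3, ht4⟩ := (hev2.and (hev3.and hev4)).exists
  exact absurd (hgub t ht3.le ht4) (not_le.2 ht2)
end
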